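/- For (t,x) and (t̃,x̃) in ℕ × ∂B with t, t̃ ≥ 1 and (t̃,x̃) ∈ S(t,x), the transforms N_{t,x} and N_{t̃,x̃} agree on functions supported in B: for every h : ℤ^d → ℝ vanishing outside B and every (u,z) ∈ S(t̃,x̃), the (u,z)-component of N_{t,x} applied to (h(w + r e_d))_{(r,w)∈S(t,x)} equals the (u,z)-component of N_{t̃,x̃} applied to (h(w + r e_d))_{(r,w)∈S(t̃,x̃)}. -/

import Mathlib

open Finset

/-- The `i`-th standard unit vector `e_i` in `ℤ^(d+1)`. -/
def unitVec (d : ℕ) (i : Fin (d + 1)) : Fin (d + 1) → ℤ := Pi.single i 1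

/-- The ℓ¹-norm `‖v‖₁ = ∑ i, |v i|` on `ℤ^(d+1)`. -/
def norm1 {d : ℕ} (v : Fin (d + 1) → ℤ) : ℤ := ∑ i, |v i|

/-- `P t x z` represents the `t`-step transition probability `P(Z^x_t = z)` of a
time-homogeneous Markov chain on `ℤ^(d+1)` which at each step moves by `± e_i`,
with all `2(d+1)` one-step probabilities strictly positive and summing to `1`. -/
structure IsRandomWalk (d : ℕ)
    (P : ℕ → (Fin (d + 1) → ℤ) → (Fin (d + 1) → ℤ) → ℝ) : Prop where
  nonneg : ∀ t x z, 0 ≤ P t x z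
  init : ∀ x z, P 0 x z = if z = x then 1 else 0
  step : ∀ t x z, P (t + 1) x z =
      ∑ i, P 1 x (x + unitVec d i) * P t (x + unitVec d i) z
        + ∑ i, P 1 x (x - unitVec d i) * P t (x - unitVec d i) z
  sum_one : ∀ x, (∑ i, P 1 x (x + unitVec d i)) + (∑ i, P 1 x (x - unitVec d i)) = 1
  pos_add : ∀ x i, 0 < P 1 x (x + unitVec d i)
  pos_sub : ∀ x i, 0 < P 1 x (x - unitVec d i)

/-- The expectation `E[h(Z^x_t)]` (the law of `Z^x_t` has finite support). -/
noncomputable def expect {d : ℕ} (P : ℕ → (Fin (d + 1) → ℤ) → (Fin (d + 1) → ℤ) → ℝ)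
    (t : ℕ) (x : Fin (d + 1) → ℤ) (h : (Fin (d + 1) → ℤ) → ℝ) : ℝ :=
  ∑ᶠ z, h z * P t x z

/-- The finite set `S(t,x) = {(s,y) ∈ ℕ × ∂B : 1 ≤ s ≤ t, ‖y − x‖₁ ≤ t − s,
and t − s − ‖y − x‖₁ is even}`. -/
noncomputable def Sset (d t : ℕ) (x : Fin (d + 1) → ℤ) : Finset (ℕ × (Fin (d + 1) → ℤ)) :=
  ((Finset.Icc 1 t) ×ˢ (Fintype.piFinset fun i => Finset.Icc (x i - t) (x i + t))).filter
    (fun p => p.2 (Fin.last d) = 0 ∧ norm1 (p.2 - x) ≤ (t : ℤ) - p.1 ∧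
      Even ((t : ℤ) - p.1 - norm1 (p.2 - x)))

/-- The matrix `W^+_{t,x}`, with entries `(W^+)_{(s,y),(u,z)} = P(Z^y_s = z + u e_d)`. -/
noncomputable def Wplus {d : ℕ} (P : ℕ → (Fin (d + 1) → ℤ) → (Fin (d + 1) → ℤ) → ℝ)
    (t : ℕ) (x : Fin (d + 1) → ℤ) :
    Matrix {p // p ∈ Sset d t x} {p // p ∈ Sset d t x} ℝ :=
  fun p q => P p.1.1 p.1.2 (q.1.2 + Pi.single (Fin.last d) (q.1.1 : ℤ))

/-- The matrix `W^-_{t,x}`, with entries `(W^-)_{(s,y),(u,z)} = P(Z^y_s = z - u e_d)`. -/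
noncomputable def Wminus {d : ℕ} (P : ℕ → (Fin (d + 1) → ℤ) → (Fin (d + 1) → ℤ) → ℝ)
    (t : ℕ) (x : Fin (d + 1) → ℤ) :
    Matrix {p // p ∈ Sset d t x} {p // p ∈ Sset d t x} ℝ :=
  fun p q => P p.1.1 p.1.2 (q.1.2 - Pi.single (Fin.last d) (q.1.1 : ℤ))

/-- `N_{t,x} = (W^-_{t,x})⁻¹ W^+_{t,x}`. -/
noncomputable def Nmat {d : ℕ} (P : ℕ → (Fin (d + 1) → ℤ) → (Fin (d + 1) → ℤ) → ℝ)
    (t : ℕ) (x : Fin (d + 1) → ℤ) :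
    Matrix {p // p ∈ Sset d t x} {p // p ∈ Sset d t x} ℝ :=
  (Wminus P t x)⁻¹ * Wplus P t x

/-- The extended transform `N f`, vanishing outside `{w : w_d < 0}`, defined at a point
`w = x − t e_d` (with `x ∈ ∂B`, `t ≥ 1`) as the `(t,x)`-component of `N_{t,x}` applied to
the vector `(f(z + u e_d))_{(u,z) ∈ S(t,x)}`.  (Note that `(t,x) ∈ S(t,x)` always holds
in this situation, so the guard below is satisfied exactly when `w_d < 0`.) -/
noncomputable def Ntrans {d : ℕ} (P : ℕ → (Fin (d + 1) → ℤ) → (Fin (d + 1) → ℤ) → ℝ)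
    (f : (Fin (d + 1) → ℤ) → ℝ) : (Fin (d + 1) → ℤ) → ℝ := fun w =>
  if hm : ((-(w (Fin.last d))).toNat, Function.update w (Fin.last d) 0) ∈
      Sset d (-(w (Fin.last d))).toNat (Function.update w (Fin.last d) 0) then
    (Nmat P (-(w (Fin.last d))).toNat (Function.update w (Fin.last d) 0)).mulVec
      (fun p => f (p.1.2 + Pi.single (Fin.last d) (p.1.1 : ℤ)))
      ⟨((-(w (Fin.last d))).toNat, Function.update w (Fin.last d) 0), hm⟩
  else 0


/-!
A walk from `y ∈ ∂B` can be at `z ± u e_d` (with `z ∈ ∂B`, `u ≥ 1`) at time `s` only if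
`‖z - y‖₁ + u ≤ s` with matching parity, i.e. only if `(u,z) ∈ S(s,y)`; and `S(s,y) ⊆ S(t,x)`
whenever `(s,y) ∈ S(t,x)`. Hence the rows of `W^±_{t,x}` indexed by `S(t̃,x̃)` vanish outside
`S(t̃,x̃)`, where they are the rows of `W^±_{t̃,x̃}`. Restricting `W^-_{t,x} g = W^+_{t,x} v`
to these rows shows that `g` restricted to `S(t̃,x̃)` solves `W^-_{t̃,x̃} g = W^+_{t̃,x̃} v`.
-/

namespace Matrix

variable {α R : Type*} [CommRing R] {S T : Finset α}

theorem submatrix_mulVec_eq_of_rows_supported (A : Matrix α α R) (hTS : T ⊆ S)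
    (hA : ∀ p ∈ T, ∀ q ∈ S, A p q ≠ 0 → q ∈ T) (v : α → R) {p : α} (hp : p ∈ T) :
    (A.submatrix ((↑) : S → α) (↑) *ᵥ fun q : S => v q) ⟨p, hTS hp⟩ =
      (A.submatrix ((↑) : T → α) (↑) *ᵥ fun q : T => v q) ⟨p, hp⟩ := by
  simp only [mulVec, dotProduct, submatrix_apply]
  rw [Finset.sum_coe_sort S fun q => A p q * v q, Finset.sum_coe_sort T fun q => A p q * v q]
  refine (Finset.sum_subset hTS fun q hqS hqT => ?_).symm
  by_contra hne
  exact hqT (hA p hp q hqS (left_ne_zero_of_mul hne))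

theorem inv_mul_mulVec_submatrix_eq_of_rows_supported [DecidableEq α] (A B : Matrix α α R)
    (hTS : T ⊆ S)
    (hA : ∀ p ∈ T, ∀ q ∈ S, A p q ≠ 0 → q ∈ T) (hB : ∀ p ∈ T, ∀ q ∈ S, B p q ≠ 0 → q ∈ T)
    (hAS : IsUnit (A.submatrix ((↑) : S → α) (↑)).det)
    (hAT : IsUnit (A.submatrix ((↑) : T → α) (↑)).det) (v : α → R) {p : α} (hp : p ∈ T) :
    (((A.submatrix ((↑) : S → α) (↑))⁻¹ * B.submatrix (↑) (↑)) *ᵥ fun q : S => v q) ⟨p, hTS hp⟩ =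
      (((A.submatrix ((↑) : T → α) (↑))⁻¹ * B.submatrix (↑) (↑)) *ᵥ fun q : T => v q) ⟨p, hp⟩ := by
  set g := ((A.submatrix ((↑) : S → α) (↑))⁻¹ * B.submatrix (↑) (↑)) *ᵥ fun q : S => v q
  set G : α → R := fun q => if hq : q ∈ S then g ⟨q, hq⟩ else 0
  have hgG : g = fun q : S => G q := funext fun q => by simp [G]
  have hg : A.submatrix ((↑) : S → α) (↑) *ᵥ g =
      B.submatrix ((↑) : S → α) (↑) *ᵥ fun q : S => v q := by
    rw [mulVec_mulVec, ← Matrix.mul_assoc, mul_nonsing_inv _ hAS, Matrix.one_mul]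
  have hGT : A.submatrix ((↑) : T → α) (↑) *ᵥ (fun q : T => G q) =
      B.submatrix ((↑) : T → α) (↑) *ᵥ fun q : T => v q := by
    funext ⟨q, hq⟩
    rw [← submatrix_mulVec_eq_of_rows_supported A hTS hA G hq, ← hgG, hg,
      submatrix_mulVec_eq_of_rows_supported B hTS hB v hq]
  rw [← Matrix.mulVec_mulVec, ← hGT, mulVec_mulVec, nonsing_inv_mul _ hAT, one_mulVec]
  exact congrFun hgG _

theorem det_ne_zero_of_blockTriangular {m β : Type*} [Fintype m] [DecidableEq m] [LinearOrder β]
    [NoZeroDivisors R] [Nontrivial R] {M : Matrix m m R} {b : m → β} (hM : M.BlockTriangular b)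
    (hblock : ∀ i j, b i = b j → i ≠ j → M i j = 0) (hdiag : ∀ i, M i i ≠ 0) : M.det ≠ 0 := by
  rw [hM.det, Finset.prod_ne_zero_iff]
  intro a _
  have hdiagonal : M.toSquareBlock b a = diagonal fun i : {i // b i = a} => M i i := by
    ext i j
    rcases eq_or_ne i j with rfl | hij
    · simp [toSquareBlock_def]
    · rw [diagonal_apply_ne _ hij, toSquareBlock_def, of_apply,
        hblock i j (i.2.trans j.2.symm) fun h => hij (Subtype.ext h)]
  rw [hdiagonal, det_diagonal, Finset.prod_ne_zero_iff]
  exact fun i _ => hdiag i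

end Matrix

section Lattice

variable {d : ℕ}

theorem norm1_nonneg (v : Fin (d + 1) → ℤ) : 0 ≤ norm1 v :=
  Finset.sum_nonneg fun i _ => abs_nonneg (v i)

theorem abs_le_norm1 (v : Fin (d + 1) → ℤ) (i : Fin (d + 1)) : |v i| ≤ norm1 v :=
  Finset.single_le_sum (f := fun j => |v j|) (fun j _ => abs_nonneg (v j)) (Finset.mem_univ i)

theorem norm1_eq_zero_iff {v : Fin (d + 1) → ℤ} : norm1 v = 0 ↔ v = 0 := by
  simp [norm1, Finset.sum_eq_zero_iff_of_nonneg, funext_iff]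

theorem norm1_add_le (v w : Fin (d + 1) → ℤ) : norm1 (v + w) ≤ norm1 v + norm1 w := by
  simp only [norm1, Pi.add_apply, ← Finset.sum_add_distrib]
  exact Finset.sum_le_sum fun i _ => abs_add_le (v i) (w i)

theorem even_norm1_sub_sum (v : Fin (d + 1) → ℤ) : Even (norm1 v - ∑ i, v i) := by
  rw [norm1, ← Finset.sum_sub_distrib]
  refine Finset.even_sum _ fun i _ => ?_
  rcases abs_cases (v i) with ⟨h, _⟩ | ⟨h, _⟩ <;> rw [h]
  · simp
  · exact ⟨-v i, by ring⟩

theorem even_norm1_add_sub (v w : Fin (d + 1) → ℤ) :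
    Even (norm1 v + norm1 w - norm1 (v + w)) := by
  have hv := even_norm1_sub_sum v
  have hw := even_norm1_sub_sum w
  have hvw := even_norm1_sub_sum (v + w)
  simp only [Pi.add_apply, Finset.sum_add_distrib] at hvw
  rw [Int.even_iff] at hv hw hvw ⊢
  omega

theorem norm1_add_single_last {v : Fin (d + 1) → ℤ} (hv : v (Fin.last d) = 0) (c : ℤ) :
    norm1 (v + Pi.single (Fin.last d) c) = norm1 v + |c| := by
  rw [norm1, ← Finset.add_sum_erase _ _ (Finset.mem_univ (Fin.last d)), norm1,
    ← Finset.add_sum_erase _ _ (Finset.mem_univ (Fin.last d))]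
  have hrest : ∀ i ∈ Finset.univ.erase (Fin.last d),
      |(v + Pi.single (Fin.last d) c : Fin (d + 1) → ℤ) i| = |v i| := fun i hi => by
    simp [Finset.ne_of_mem_erase hi]
  rw [Finset.sum_congr rfl hrest]
  simp [hv]
  ring

/-- The displacements `v` that are sums of exactly `n` unit steps `±e_i`. -/
def ReachableIn (n : ℤ) (v : Fin (d + 1) → ℤ) : Prop :=
  norm1 v ≤ n ∧ Even (n - norm1 v)

theorem reachableIn_zero_iff {v : Fin (d + 1) → ℤ} : ReachableIn 0 v ↔ v = 0 := by
  refine ⟨fun h => norm1_eq_zero_iff.mp (le_antisymm h.1 (norm1_nonneg v)), ?_⟩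
  rintro rfl
  simp [ReachableIn, norm1]

theorem ReachableIn.add {m n : ℤ} {v w : Fin (d + 1) → ℤ} (hv : ReachableIn m v)
    (hw : ReachableIn n w) : ReachableIn (m + n) (v + w) := by
  obtain ⟨hv₁, hv₂⟩ := hv
  obtain ⟨hw₁, hw₂⟩ := hw
  have htri := norm1_add_le v w
  have hpar := even_norm1_add_sub v w
  rw [Int.even_iff] at hv₂ hw₂ hpar
  exact ⟨by omega, by rw [Int.even_iff]; omega⟩

theorem reachableIn_one_unitVec (i : Fin (d + 1)) : ReachableIn 1 (unitVec d i) := by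
  simp [ReachableIn, norm1, unitVec, Pi.single_apply, apply_ite abs]

theorem reachableIn_one_neg_unitVec (i : Fin (d + 1)) : ReachableIn 1 (-unitVec d i) := by
  simp [ReachableIn, norm1, unitVec, Pi.single_apply, apply_ite abs]

theorem reachableIn_add_single_last_iff {n c : ℤ} {v : Fin (d + 1) → ℤ}
    (hv : v (Fin.last d) = 0) :
    ReachableIn n (v + Pi.single (Fin.last d) c) ↔ ReachableIn (n - |c|) v := by
  simp only [ReachableIn, norm1_add_single_last hv]
  constructor <;> rintro ⟨h₁, h₂⟩ <;> refine ⟨by omega, ?_⟩ <;> convert h₂ using 1 <;> ring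

end Lattice

section Walk

variable {d : ℕ} {P : ℕ → (Fin (d + 1) → ℤ) → (Fin (d + 1) → ℤ) → ℝ}

theorem mem_Sset_iff {t : ℕ} {x : Fin (d + 1) → ℤ} {p : ℕ × (Fin (d + 1) → ℤ)} :
    p ∈ Sset d t x ↔ 1 ≤ p.1 ∧ p.2 (Fin.last d) = 0 ∧ ReachableIn (t - p.1) (p.2 - x) := by
  simp only [Sset, ReachableIn, Finset.mem_filter, Finset.mem_product, Finset.mem_Icc,
    Fintype.mem_piFinset]
  constructor
  · rintro ⟨⟨⟨hp₁, -⟩, -⟩, hp₂⟩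
    exact ⟨hp₁, hp₂⟩
  · rintro ⟨hp₁, hp₂, hle, heven⟩
    have hbox : ∀ i, |p.2 i - x i| ≤ t := fun i => by
      have := abs_le_norm1 (p.2 - x) i
      simp only [Pi.sub_apply] at this
      omega
    refine ⟨⟨⟨hp₁, by have := norm1_nonneg (p.2 - x); omega⟩, fun i => ?_⟩, hp₂, hle, heven⟩
    have := abs_le.mp (hbox i)
    constructor <;> omega

theorem Sset_subset_of_mem {t : ℕ} {x : Fin (d + 1) → ℤ} {p : ℕ × (Fin (d + 1) → ℤ)}
    (hp : p ∈ Sset d t x) : Sset d p.1 p.2 ⊆ Sset d t x := by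
  intro q hq
  rw [mem_Sset_iff] at hp hq ⊢
  refine ⟨hq.1, hq.2.1, ?_⟩
  convert hp.2.2.add hq.2.2 using 1 <;> abel

theorem mem_Sset_of_reachableIn {t t' : ℕ} {x x' : Fin (d + 1) → ℤ}
    {p q : ℕ × (Fin (d + 1) → ℤ)} (hp : p ∈ Sset d t x) (hq : q ∈ Sset d t' x')
    (h : ReachableIn (p.1 - q.1) (q.2 - p.2)) : q ∈ Sset d t x :=
  Sset_subset_of_mem hp (mem_Sset_iff.mpr ⟨(mem_Sset_iff.mp hq).1, (mem_Sset_iff.mp hq).2.1, h⟩)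

theorem IsRandomWalk.reachableIn_of_ne_zero (hP : IsRandomWalk d P) {s : ℕ}
    {y w : Fin (d + 1) → ℤ} (h : P s y w ≠ 0) : ReachableIn s (w - y) := by
  induction s generalizing y with
  | zero =>
    rw [hP.init] at h
    rw [Nat.cast_zero, reachableIn_zero_iff, sub_eq_zero]
    by_contra hne
    simp [hne] at h
  | succ s ih =>
    obtain ⟨u, hu, hne⟩ : ∃ u, ReachableIn 1 u ∧ P s (y + u) w ≠ 0 := by
      rw [hP.step] at h
      obtain hplus | hminus : (∑ i, P 1 y (y + unitVec d i) * P s (y + unitVec d i) w) ≠ 0 ∨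
          (∑ i, P 1 y (y - unitVec d i) * P s (y - unitVec d i) w) ≠ 0 := by
        by_contra! hz
        exact h (by rw [hz.1, hz.2, add_zero])
      · obtain ⟨i, -, hi⟩ := Finset.exists_ne_zero_of_sum_ne_zero hplus
        exact ⟨unitVec d i, reachableIn_one_unitVec i, right_ne_zero_of_mul hi⟩
      · obtain ⟨i, -, hi⟩ := Finset.exists_ne_zero_of_sum_ne_zero hminus
        refine ⟨-unitVec d i, reachableIn_one_neg_unitVec i, ?_⟩
        rw [← sub_eq_add_neg]
        exact right_ne_zero_of_mul hi
    convert (ih hne).add hu using 1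
    · push_cast; rfl
    · abel

theorem IsRandomWalk.pos_sub_single_last (hP : IsRandomWalk d P) (s : ℕ)
    (y : Fin (d + 1) → ℤ) : 0 < P s y (y - Pi.single (Fin.last d) (s : ℤ)) := by
  induction s generalizing y with
  | zero => simp [hP.init]
  | succ s ih =>
    set e := unitVec d (Fin.last d)
    have htarget : y - Pi.single (Fin.last d) ((s + 1 : ℕ) : ℤ)
        = (y - e) - Pi.single (Fin.last d) (s : ℤ) := by
      simp only [e, unitVec, Nat.cast_succ, Pi.single_add]
      abel
    have hterm : 0 < P 1 y (y - e) * P s (y - e) ((y - e) - Pi.single (Fin.last d) (s : ℤ)) :=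
      mul_pos (hP.pos_sub y _) (ih _)
    rw [hP.step, htarget]
    refine add_pos_of_nonneg_of_pos
      (Finset.sum_nonneg fun i _ => mul_nonneg (hP.nonneg _ _ _) (hP.nonneg _ _ _))
      (hterm.trans_le ?_)
    exact Finset.single_le_sum (f := fun i => P 1 y (y - unitVec d i) * P s (y - unitVec d i) _)
      (fun i _ => mul_nonneg (hP.nonneg _ _ _) (hP.nonneg _ _ _)) (Finset.mem_univ _)

theorem IsRandomWalk.reachableIn_of_add_single_last_ne_zero (hP : IsRandomWalk d P) {s : ℕ}
    {y z : Fin (d + 1) → ℤ} {c : ℤ} (hy : y (Fin.last d) = 0) (hz : z (Fin.last d) = 0)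
    (h : P s y (z + Pi.single (Fin.last d) c) ≠ 0) : ReachableIn (s - |c|) (z - y) := by
  have := hP.reachableIn_of_ne_zero h
  rwa [add_sub_right_comm, reachableIn_add_single_last_iff (by simp [hy, hz])] at this

end Walk

section Transform

variable {d : ℕ} {P : ℕ → (Fin (d + 1) → ℤ) → (Fin (d + 1) → ℤ) → ℝ}

def WplusKernel (P : ℕ → (Fin (d + 1) → ℤ) → (Fin (d + 1) → ℤ) → ℝ) :
    Matrix (ℕ × (Fin (d + 1) → ℤ)) (ℕ × (Fin (d + 1) → ℤ)) ℝ :=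
  Matrix.of fun p q => P p.1 p.2 (q.2 + Pi.single (Fin.last d) (q.1 : ℤ))

def WminusKernel (P : ℕ → (Fin (d + 1) → ℤ) → (Fin (d + 1) → ℤ) → ℝ) :
    Matrix (ℕ × (Fin (d + 1) → ℤ)) (ℕ × (Fin (d + 1) → ℤ)) ℝ :=
  Matrix.of fun p q => P p.1 p.2 (q.2 - Pi.single (Fin.last d) (q.1 : ℤ))

theorem Wplus_eq_submatrix (t : ℕ) (x : Fin (d + 1) → ℤ) :
    Wplus P t x = (WplusKernel P).submatrix (↑) (↑) := rfl

theorem Wminus_eq_submatrix (t : ℕ) (x : Fin (d + 1) → ℤ) :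
    Wminus P t x = (WminusKernel P).submatrix (↑) (↑) := rfl

theorem IsRandomWalk.reachableIn_of_WplusKernel_ne_zero (hP : IsRandomWalk d P)
    {p q : ℕ × (Fin (d + 1) → ℤ)} (hp : p.2 (Fin.last d) = 0) (hq : q.2 (Fin.last d) = 0)
    (h : WplusKernel P p q ≠ 0) : ReachableIn (p.1 - q.1) (q.2 - p.2) := by
  simpa using hP.reachableIn_of_add_single_last_ne_zero hp hq h

theorem IsRandomWalk.reachableIn_of_WminusKernel_ne_zero (hP : IsRandomWalk d P)
    {p q : ℕ × (Fin (d + 1) → ℤ)} (hp : p.2 (Fin.last d) = 0) (hq : q.2 (Fin.last d) = 0)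
    (h : WminusKernel P p q ≠ 0) : ReachableIn (p.1 - q.1) (q.2 - p.2) := by
  rw [WminusKernel, Matrix.of_apply, sub_eq_add_neg, ← Pi.single_neg] at h
  simpa using hP.reachableIn_of_add_single_last_ne_zero hp hq h

theorem IsRandomWalk.mem_Sset_of_WplusKernel_ne_zero (hP : IsRandomWalk d P) {t t' : ℕ}
    {x x' : Fin (d + 1) → ℤ} {p q : ℕ × (Fin (d + 1) → ℤ)} (hp : p ∈ Sset d t x)
    (hq : q ∈ Sset d t' x') (h : WplusKernel P p q ≠ 0) : q ∈ Sset d t x :=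
  mem_Sset_of_reachableIn hp hq <| hP.reachableIn_of_WplusKernel_ne_zero
    (mem_Sset_iff.mp hp).2.1 (mem_Sset_iff.mp hq).2.1 h

theorem IsRandomWalk.mem_Sset_of_WminusKernel_ne_zero (hP : IsRandomWalk d P) {t t' : ℕ}
    {x x' : Fin (d + 1) → ℤ} {p q : ℕ × (Fin (d + 1) → ℤ)} (hp : p ∈ Sset d t x)
    (hq : q ∈ Sset d t' x') (h : WminusKernel P p q ≠ 0) : q ∈ Sset d t x :=
  mem_Sset_of_reachableIn hp hq <| hP.reachableIn_of_WminusKernel_ne_zero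
    (mem_Sset_iff.mp hp).2.1 (mem_Sset_iff.mp hq).2.1 h

-- Ordering `S(t,x)` by decreasing time makes `W^-_{t,x}` block triangular with diagonal blocks
-- that are themselves diagonal, with entries `P(Z^y_s = y - s e_d) > 0`.
theorem IsRandomWalk.isUnit_det_Wminus (hP : IsRandomWalk d P) (t : ℕ)
    (x : Fin (d + 1) → ℤ) : IsUnit (Wminus P t x).det := by
  have reach : ∀ p q : Sset d t x, Wminus P t x p q ≠ 0 →
      ReachableIn (p.1.1 - q.1.1) (q.1.2 - p.1.2) := fun p q =>
    hP.reachableIn_of_WminusKernel_ne_zero (mem_Sset_iff.mp p.2).2.1 (mem_Sset_iff.mp q.2).2.1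
  refine isUnit_iff_ne_zero.mpr
    (Matrix.det_ne_zero_of_blockTriangular (b := fun p => OrderDual.toDual p.1.1) ?_ ?_ ?_)
  · intro p q hlt
    by_contra hne
    have := (reach p q hne).1
    have := norm1_nonneg (q.1.2 - p.1.2)
    simp only [OrderDual.toDual_lt_toDual] at hlt
    omega
  · intro p q hpq hne
    by_contra hW
    have hr := reach p q hW
    rw [OrderDual.toDual_inj.mp hpq, sub_self, reachableIn_zero_iff, sub_eq_zero] at hr
    exact hne (Subtype.ext (Prod.ext (OrderDual.toDual_inj.mp hpq) hr.symm))
  · exact fun p => (hP.pos_sub_single_last p.1.1 p.1.2).ne'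

end Transform

theorem stmt_9_general (d : ℕ) (P : ℕ → (Fin (d + 1) → ℤ) → (Fin (d + 1) → ℤ) → ℝ)
    (hP : IsRandomWalk d P) (t t' : ℕ) (x x' : Fin (d + 1) → ℤ)
    (hmem : (t', x') ∈ Sset d t x) (h : (Fin (d + 1) → ℤ) → ℝ) :
    ∀ (q : ℕ × (Fin (d + 1) → ℤ)) (hq : q ∈ Sset d t' x') (hq' : q ∈ Sset d t x),
      (Nmat P t x).mulVec
        (fun p => h (p.1.2 + Pi.single (Fin.last d) (p.1.1 : ℤ))) ⟨q, hq'⟩ =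
      (Nmat P t' x').mulVec
        (fun p => h (p.1.2 + Pi.single (Fin.last d) (p.1.1 : ℤ))) ⟨q, hq⟩ := by
  intro q hq _
  simp only [Nmat, Wminus_eq_submatrix, Wplus_eq_submatrix]
  exact Matrix.inv_mul_mulVec_submatrix_eq_of_rows_supported (WminusKernel P) (WplusKernel P)
    (Sset_subset_of_mem hmem)
    (fun _ hp _ hq => hP.mem_Sset_of_WminusKernel_ne_zero hp hq)
    (fun _ hp _ hq => hP.mem_Sset_of_WplusKernel_ne_zero hp hq)
    (hP.isUnit_det_Wminus t x) (hP.isUnit_det_Wminus t' x')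
    (fun p => h (p.2 + Pi.single (Fin.last d) (p.1 : ℤ))) hq

/-- if `(t̃,x̃) ∈ S(t,x)`, then `N_{t,x}` and `N_{t̃,x̃}` agree on vectors
coming from a function `h` supported in `B`. -/
theorem stmt_9 (d : ℕ) (P : ℕ → (Fin (d + 1) → ℤ) → (Fin (d + 1) → ℤ) → ℝ)
    (hP : IsRandomWalk d P) (t t' : ℕ) (ht : 1 ≤ t) (ht' : 1 ≤ t')
    (x x' : Fin (d + 1) → ℤ) (hx : x (Fin.last d) = 0) (hx' : x' (Fin.last d) = 0)
    (hmem : (t', x') ∈ Sset d t x)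
    (h : (Fin (d + 1) → ℤ) → ℝ) (hh : ∀ z, z (Fin.last d) ≤ 0 → h z = 0) :
    ∀ (q : ℕ × (Fin (d + 1) → ℤ)) (hq : q ∈ Sset d t' x') (hq' : q ∈ Sset d t x),
      (Nmat P t x).mulVec
        (fun p => h (p.1.2 + Pi.single (Fin.last d) (p.1.1 : ℤ))) ⟨q, hq'⟩ =
      (Nmat P t' x').mulVec
        (fun p => h (p.1.2 + Pi.single (Fin.last d) (p.1.1 : ℤ))) ⟨q, hq⟩ :=
  stmt_9_general d P hP t t' x x' hmem h
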